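/- Let A be a unital C*-algebra, a a nonzero positive element of A, and x ∈ A admitting an a-adjoint x^{#a}, with ‖x‖_a < ∞ and ‖x^{#a}‖_a < ∞. Then for every 0 ≤ α ≤ 1, v_a(x)² ≤ (α/2)·v_a(x²) + ‖(α/4)·x x^{#a} + (1 − 3α/4)·x^{#a} x‖_a. -/

import Mathlib

/-!
For a functional `f ∈ S_a(A)`, `(u, v) ↦ f (star v * a * u)` is a semi-inner product, realised
in the GNS space of `f` by `u ↦ √a · u`. In that space `e = √a · 1` is a unit vector with
`f (a x) = ⟪e, √a x⟫ = ⟪√a x^{#a}, e⟫` and `f (a x²) = ⟪√a x^{#a}, √a x⟫`, so Buzano's inequality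
`|⟪v, e⟫ ⟪e, u⟫| ≤ (|⟪v, u⟫| + ‖v‖ ‖u‖) / 2`, followed by AM-GM, and Cauchy-Schwarz
`|⟪e, u⟫|² ≤ ‖u‖²`, combined with weights `α` and `1 - α`, give
`|f (a x)|² ≤ (α/2) |f (a x²)| + Re f (a w)` for the element `w` inside the `a`-seminorm;
finally `Re f (a w) = Re ⟪e, √a w⟫ ≤ ‖w‖ₐ`.

The suprema are finite because `‖x y‖ₐ ≤ ‖x‖ₐ ‖y‖ₐ`: for a positive functional `φ`, testing the
bound `f (star x * a * x) ≤ ‖x‖ₐ²` on the renormalised functionals `f + t φ` for all `t ≥ 0`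
gives `φ (star x * a * x) ≤ ‖x‖ₐ² φ a`, which is then applied to `φ = f (star y * · * y)`.
-/

open scoped ComplexOrder

section

variable {A : Type*} [CStarAlgebra A] [PartialOrder A] [StarOrderedRing A]

/-- A positive linear functional on `A`: `f (x* x) ≥ 0` for all `x`. -/
def IsPosLF (f : A →ₗ[ℂ] ℂ) : Prop := ∀ x : A, 0 ≤ f (star x * x)

/-- Membership in `S_a(A)`: positive linear functionals `f` with `f a = 1`. -/
def MemSa (a : A) (f : A →ₗ[ℂ] ℂ) : Prop := IsPosLF f ∧ f a = 1

/-- The set of values whose supremum is the `a`-seminorm `‖x‖ₐ`. -/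
def aNormSet (a x : A) : Set ℝ :=
  {r : ℝ | ∃ f : A →ₗ[ℂ] ℂ, MemSa a f ∧ r = Real.sqrt (f (star x * a * x)).re}

/-- The `a`-seminorm `‖x‖ₐ = sup {√(f(x* a x)) : f ∈ S_a(A)}`. -/
noncomputable def aNorm (a x : A) : ℝ := sSup (aNormSet a x)

/-- The `a`-numerical radius `vₐ(x) = sup {|f(a x)| : f ∈ S_a(A)}`. -/
noncomputable def aNR (a x : A) : ℝ :=
  sSup {r : ℝ | ∃ f : A →ₗ[ℂ] ℂ, MemSa a f ∧ r = ‖f (a * x)‖}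

end

open scoped InnerProductSpace

section InnerProduct

variable {𝕜 E : Type*} [RCLike 𝕜] [SeminormedAddCommGroup E] [InnerProductSpace 𝕜 E]

open RCLike in
theorem norm_inner_mul_inner_le_of_norm_eq_one {e : E} (he : ‖e‖ = 1) (u v : E) :
    ‖⟪u, e⟫_𝕜 * ⟪e, v⟫_𝕜‖ ≤ (‖⟪u, v⟫_𝕜‖ + ‖u‖ * ‖v‖) / 2 := by
  set c := ⟪e, v⟫_𝕜
  -- `(2 * c) • e - v` is the reflection of `v` in the line through `e`
  have hreflect : ‖(2 * c) • e - v‖ = ‖v‖ := by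
    have hre : re ⟪(2 * c) • e, v⟫_𝕜 = 2 * ‖c‖ ^ 2 := by
      rw [inner_smul_left, map_mul (starRingEnd 𝕜), map_ofNat (starRingEnd 𝕜), mul_assoc,
        RCLike.conj_mul]
      norm_cast
    have := norm_sub_sq (𝕜 := 𝕜) ((2 * c) • e) v
    rw [hre, norm_smul, he, mul_one, norm_mul, RCLike.norm_two] at this
    nlinarith [norm_nonneg ((2 * c) • e - v), norm_nonneg v]
  have hsum : 2 * (⟪u, e⟫_𝕜 * c) = ⟪u, v⟫_𝕜 + ⟪u, (2 * c) • e - v⟫_𝕜 := by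
    rw [inner_sub_right, inner_smul_right]; ring
  have : 2 * ‖⟪u, e⟫_𝕜 * c‖ ≤ ‖⟪u, v⟫_𝕜‖ + ‖u‖ * ‖v‖ :=
    calc 2 * ‖⟪u, e⟫_𝕜 * c‖ = ‖⟪u, v⟫_𝕜 + ⟪u, (2 * c) • e - v⟫_𝕜‖ := by
          rw [← hsum, norm_mul (2 : 𝕜), RCLike.norm_two]
      _ ≤ ‖⟪u, v⟫_𝕜‖ + ‖⟪u, (2 * c) • e - v⟫_𝕜‖ := norm_add_le _ _
      _ ≤ ‖⟪u, v⟫_𝕜‖ + ‖u‖ * ‖v‖ := by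
          gcongr
          exact (norm_inner_le_norm _ _).trans_eq (by rw [hreflect])
  linarith

theorem sq_norm_inner_le_of_norm_eq_one {e u v : E} (he : ‖e‖ = 1) (huv : ⟪v, e⟫_𝕜 = ⟪e, u⟫_𝕜)
    {α : ℝ} (hα0 : 0 ≤ α) (hα1 : α ≤ 1) :
    ‖⟪e, u⟫_𝕜‖ ^ 2 ≤ α / 2 * ‖⟪v, u⟫_𝕜‖ + (α / 4 * ‖v‖ ^ 2 + (1 - 3 * α / 4) * ‖u‖ ^ 2) := by
  have hbuzano := norm_inner_mul_inner_le_of_norm_eq_one (𝕜 := 𝕜) he v u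
  rw [huv, norm_mul, ← sq] at hbuzano
  have hcs : ‖⟪e, u⟫_𝕜‖ ≤ ‖u‖ := by simpa [he] using norm_inner_le_norm (𝕜 := 𝕜) e u
  have hcs2 : ‖⟪e, u⟫_𝕜‖ ^ 2 ≤ ‖u‖ ^ 2 := by gcongr
  nlinarith [sq_nonneg (‖v‖ - ‖u‖)]

end InnerProduct

theorem sq_sSup_le_of_forall_sq_le {S : Set ℝ} {R : ℝ} (hS : ∀ s ∈ S, 0 ≤ s ∧ s ^ 2 ≤ R)
    (hR : 0 ≤ R) : sSup S ^ 2 ≤ R := by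
  have hle : sSup S ≤ √R :=
    Real.sSup_le (fun s hs ↦ (le_abs_self s).trans (Real.abs_le_sqrt (hS s hs).2))
      (Real.sqrt_nonneg R)
  calc sSup S ^ 2 ≤ √R ^ 2 := pow_le_pow_left₀ (Real.sSup_nonneg fun s hs ↦ (hS s hs).1) hle 2
    _ = R := Real.sq_sqrt hR

section Unordered

variable {A : Type*} [CStarAlgebra A]

theorem IsPosLF.add {f g : A →ₗ[ℂ] ℂ} (hf : IsPosLF f) (hg : IsPosLF g) : IsPosLF (f + g) :=
  fun z ↦ add_nonneg (hf z) (hg z)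

theorem IsPosLF.smul {f : A →ₗ[ℂ] ℂ} (hf : IsPosLF f) {c : ℝ} (hc : 0 ≤ c) :
    IsPosLF ((c : ℂ) • f) :=
  fun z ↦ mul_nonneg (Complex.zero_le_real.mpr hc) (hf z)

theorem IsPosLF.comp_conj {f : A →ₗ[ℂ] ℂ} (hf : IsPosLF f) (y : A) :
    IsPosLF (f ∘ₗ LinearMap.mulLeft ℂ (star y) ∘ₗ LinearMap.mulRight ℂ y) := fun z ↦ by
  simpa [star_mul, mul_assoc] using hf (z * y)

theorem re_apply_le_sq_of_mem_upperBounds {a x : A} {M : ℝ}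
    (hM : M ∈ upperBounds (aNormSet a x)) {f : A →ₗ[ℂ] ℂ} (hf : MemSa a f) :
    (f (star x * a * x)).re ≤ M ^ 2 :=
  (Real.sqrt_le_iff.mp (hM ⟨f, hf, rfl⟩)).2

theorem aNorm_nonneg (a x : A) : 0 ≤ aNorm a x :=
  Real.sSup_nonneg fun _ ⟨_, _, h⟩ ↦ h ▸ Real.sqrt_nonneg _

theorem aNR_nonneg (a x : A) : 0 ≤ aNR a x :=
  Real.sSup_nonneg fun _ ⟨_, _, h⟩ ↦ h ▸ norm_nonneg _

end Unordered

section Ordered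

variable {A : Type*} [CStarAlgebra A] [PartialOrder A] [StarOrderedRing A]

theorem IsPosLF.map_nonneg {f : A →ₗ[ℂ] ℂ} (hf : IsPosLF f) {z : A} (hz : 0 ≤ z) : 0 ≤ f z := by
  obtain ⟨s, rfl⟩ := CStarAlgebra.nonneg_iff_eq_star_mul_self.mp hz
  exact hf s

noncomputable def IsPosLF.toPositiveLinearMap {f : A →ₗ[ℂ] ℂ} (hf : IsPosLF f) : A →ₚ[ℂ] ℂ :=
  PositiveLinearMap.mk₀ f fun _ ↦ hf.map_nonneg

noncomputable def PositiveLinearMap.sqrtMulPreGNS (f : A →ₚ[ℂ] ℂ) (a : A) : A →ₗ[ℂ] f.PreGNS :=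
  f.toPreGNS.toLinearMap ∘ₗ LinearMap.mulLeft ℂ (CFC.sqrt a)

variable {a : A}

theorem star_sqrt_mul_mul_sqrt_mul (ha : 0 ≤ a) (x y : A) :
    star (CFC.sqrt a * x) * (CFC.sqrt a * y) = star x * a * y := by
  rw [star_mul, (CFC.sqrt_nonneg a).star_eq, mul_assoc, ← mul_assoc (CFC.sqrt a),
    CFC.sqrt_mul_sqrt_self a ha, ← mul_assoc]

theorem star_mul_eq_mul_of_mul_eq_star_mul (ha : 0 ≤ a) {x xadj : A}
    (hadj : a * xadj = star x * a) : star xadj * a = a * x := by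
  simpa [star_mul, ha.star_eq] using congrArg star hadj

theorem IsPosLF.inner_sqrtMulPreGNS {f : A →ₗ[ℂ] ℂ} (hf : IsPosLF f) (ha : 0 ≤ a) (x y : A) :
    ⟪hf.toPositiveLinearMap.sqrtMulPreGNS a x, hf.toPositiveLinearMap.sqrtMulPreGNS a y⟫_ℂ =
      f (star x * a * y) :=
  congrArg f (star_sqrt_mul_mul_sqrt_mul ha x y)

theorem IsPosLF.norm_sqrtMulPreGNS {f : A →ₗ[ℂ] ℂ} (hf : IsPosLF f) (ha : 0 ≤ a) (x : A) :
    ‖hf.toPositiveLinearMap.sqrtMulPreGNS a x‖ = √(f (star x * a * x)).re :=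
  congrArg (fun z ↦ √(f z).re) (star_sqrt_mul_mul_sqrt_mul ha x x)

theorem re_apply_star_mul_mul_le (ha : 0 ≤ a) {x : A} {M : ℝ}
    (hM : M ∈ upperBounds (aNormSet a x)) {f : A →ₗ[ℂ] ℂ} (hf : MemSa a f)
    {φ : A →ₗ[ℂ] ℂ} (hφ : IsPosLF φ) : (φ (star x * a * x)).re ≤ M ^ 2 * (φ a).re := by
  set c := (φ a).re
  have hφa : φ a = c := Complex.eq_re_of_ofReal_le (r := 0) (by exact_mod_cast hφ.map_nonneg ha)
  have hc : 0 ≤ c := (Complex.nonneg_iff.mp (hφ.map_nonneg ha)).1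
  have hslope : ∀ t : ℝ, 0 ≤ t →
      t * ((φ (star x * a * x)).re - M ^ 2 * c) ≤ M ^ 2 - (f (star x * a * x)).re := by
    intro t ht
    have hpos : 0 < 1 + t * c := by positivity
    have hg : MemSa a ((((1 + t * c)⁻¹ : ℝ) : ℂ) • (f + (t : ℂ) • φ)) := by
      refine ⟨(hf.1.add (hφ.smul ht)).smul (inv_nonneg.mpr hpos.le), ?_⟩
      simp only [LinearMap.smul_apply, LinearMap.add_apply, hf.2, hφa, smul_eq_mul]
      push_cast
      field_simp
    have h := re_apply_le_sq_of_mem_upperBounds hM hg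
    simp only [LinearMap.smul_apply, LinearMap.add_apply, smul_eq_mul, Complex.re_ofReal_mul,
      Complex.add_re] at h
    rw [inv_mul_le_iff₀ hpos] at h
    linarith
  by_contra! hlt
  have hd : 0 < (φ (star x * a * x)).re - M ^ 2 * c := by linarith
  have hf0 : (f (star x * a * x)).re ≤ M ^ 2 := re_apply_le_sq_of_mem_upperBounds hM hf
  have := hslope ((M ^ 2 - (f (star x * a * x)).re + 1) / ((φ (star x * a * x)).re - M ^ 2 * c))
    (by positivity)
  rw [div_mul_cancel₀ _ hd.ne'] at this
  linarith

theorem re_apply_star_mul_mul_mul_le (ha : 0 ≤ a) {x : A} {M : ℝ}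
    (hM : M ∈ upperBounds (aNormSet a x)) {f : A →ₗ[ℂ] ℂ} (hf : MemSa a f) (y : A) :
    (f (star (x * y) * a * (x * y))).re ≤ M ^ 2 * (f (star y * a * y)).re := by
  simpa [star_mul, mul_assoc] using re_apply_star_mul_mul_le ha hM hf (hf.1.comp_conj y)

theorem bddAbove_aNormSet_add (ha : 0 ≤ a) {x y : A} (hx : BddAbove (aNormSet a x))
    (hy : BddAbove (aNormSet a y)) : BddAbove (aNormSet a (x + y)) := by
  obtain ⟨M, hM⟩ := hx
  obtain ⟨N, hN⟩ := hy
  refine ⟨M + N, ?_⟩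
  rintro _ ⟨f, hf, rfl⟩
  have hM' := hM ⟨f, hf, rfl⟩
  have hN' := hN ⟨f, hf, rfl⟩
  simp only [← hf.1.norm_sqrtMulPreGNS ha, map_add] at hM' hN' ⊢
  exact (norm_add_le _ _).trans (add_le_add hM' hN')

theorem bddAbove_aNormSet_smul (ha : 0 ≤ a) (c : ℂ) {x : A} (hx : BddAbove (aNormSet a x)) :
    BddAbove (aNormSet a (c • x)) := by
  obtain ⟨M, hM⟩ := hx
  refine ⟨‖c‖ * M, ?_⟩
  rintro _ ⟨f, hf, rfl⟩
  have hM' := hM ⟨f, hf, rfl⟩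
  simp only [← hf.1.norm_sqrtMulPreGNS ha, map_smul, norm_smul] at hM' ⊢
  gcongr

theorem bddAbove_aNormSet_mul (ha : 0 ≤ a) {x y : A} (hx : BddAbove (aNormSet a x))
    (hy : BddAbove (aNormSet a y)) : BddAbove (aNormSet a (x * y)) := by
  obtain ⟨M, hM⟩ := hx
  obtain ⟨N, hN⟩ := hy
  refine ⟨M * N, ?_⟩
  rintro _ ⟨f, hf, rfl⟩
  have hM0 : 0 ≤ M := (Real.sqrt_nonneg _).trans (hM ⟨f, hf, rfl⟩)
  calc √(f (star (x * y) * a * (x * y))).re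
      ≤ √(M ^ 2 * (f (star y * a * y)).re) :=
        Real.sqrt_le_sqrt (re_apply_star_mul_mul_mul_le ha hM hf y)
    _ = M * √(f (star y * a * y)).re := by rw [Real.sqrt_mul (by positivity), Real.sqrt_sq hM0]
    _ ≤ M * N := by gcongr; exact hN ⟨f, hf, rfl⟩

theorem bddAbove_norm_apply_mul_mul (ha : 0 ≤ a) {x xadj : A} (hadj : a * xadj = star x * a)
    (hx : BddAbove (aNormSet a x)) (hxadj : BddAbove (aNormSet a xadj)) :
    BddAbove {r : ℝ | ∃ f : A →ₗ[ℂ] ℂ, MemSa a f ∧ r = ‖f (a * (x * x))‖} := by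
  obtain ⟨M, hM⟩ := hx
  obtain ⟨N, hN⟩ := hxadj
  refine ⟨N * M, ?_⟩
  rintro _ ⟨f, hf, rfl⟩
  set ξ := hf.1.toPositiveLinearMap.sqrtMulPreGNS a
  have hinner : ⟪ξ xadj, ξ x⟫_ℂ = f (a * (x * x)) := by
    rw [hf.1.inner_sqrtMulPreGNS ha, star_mul_eq_mul_of_mul_eq_star_mul ha hadj, mul_assoc]
  have hNξ : ‖ξ xadj‖ ≤ N := by
    rw [hf.1.norm_sqrtMulPreGNS ha]; exact hN ⟨f, hf, rfl⟩
  have hMξ : ‖ξ x‖ ≤ M := by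
    rw [hf.1.norm_sqrtMulPreGNS ha]; exact hM ⟨f, hf, rfl⟩
  rw [← hinner]
  exact (norm_inner_le_norm _ _).trans
    (mul_le_mul hNξ hMξ (norm_nonneg _) ((norm_nonneg _).trans hNξ))

theorem IsPosLF.sq_norm_sqrtMulPreGNS {f : A →ₗ[ℂ] ℂ} (hf : IsPosLF f) (ha : 0 ≤ a) (x : A) :
    ‖hf.toPositiveLinearMap.sqrtMulPreGNS a x‖ ^ 2 = (f (star x * a * x)).re := by
  rw [← hf.inner_sqrtMulPreGNS ha]
  exact (inner_self_eq_norm_sq (𝕜 := ℂ) _).symm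

theorem sq_norm_apply_mul_le (ha : 0 ≤ a) {x xadj : A} (hadj : a * xadj = star x * a)
    {f : A →ₗ[ℂ] ℂ} (hf : MemSa a f) {α : ℝ} (hα0 : 0 ≤ α) (hα1 : α ≤ 1) :
    ‖f (a * x)‖ ^ 2 ≤ α / 2 * ‖f (a * (x * x))‖ +
      (α / 4 * (f (star xadj * a * xadj)).re + (1 - 3 * α / 4) * (f (star x * a * x)).re) := by
  set ξ := hf.1.toPositiveLinearMap.sqrtMulPreGNS a
  have hsa := star_mul_eq_mul_of_mul_eq_star_mul ha hadj
  have he : ‖ξ 1‖ = 1 := by simp [ξ, hf.1.norm_sqrtMulPreGNS ha, hf.2]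
  have hex : ⟪ξ 1, ξ x⟫_ℂ = f (a * x) := by simp [ξ, hf.1.inner_sqrtMulPreGNS ha]
  have hxadj1 : ⟪ξ xadj, ξ 1⟫_ℂ = f (a * x) := by simp [ξ, hf.1.inner_sqrtMulPreGNS ha, hsa]
  have hxadjx : ⟪ξ xadj, ξ x⟫_ℂ = f (a * (x * x)) := by
    rw [hf.1.inner_sqrtMulPreGNS ha, hsa, mul_assoc]
  have key := sq_norm_inner_le_of_norm_eq_one he (hxadj1.trans hex.symm) hα0 hα1
  rwa [hex, hxadjx, hf.1.sq_norm_sqrtMulPreGNS ha, hf.1.sq_norm_sqrtMulPreGNS ha] at key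

theorem re_apply_mul_le_sqrt (ha : 0 ≤ a) {f : A →ₗ[ℂ] ℂ} (hf : MemSa a f) (w : A) :
    (f (a * w)).re ≤ √(f (star w * a * w)).re := by
  have he : ‖hf.1.toPositiveLinearMap.sqrtMulPreGNS a 1‖ = 1 := by
    simp [hf.1.norm_sqrtMulPreGNS ha, hf.2]
  simpa [hf.1.inner_sqrtMulPreGNS ha, he, hf.1.norm_sqrtMulPreGNS ha] using
    re_inner_le_norm (𝕜 := ℂ) (hf.1.toPositiveLinearMap.sqrtMulPreGNS a 1)
      (hf.1.toPositiveLinearMap.sqrtMulPreGNS a w)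

theorem re_apply_mul_smul_add_smul (ha : 0 ≤ a) {x xadj : A} (hadj : a * xadj = star x * a)
    (f : A →ₗ[ℂ] ℂ) (p q : ℝ) :
    (f (a * ((p : ℂ) • (x * xadj) + (q : ℂ) • (xadj * x)))).re =
      p * (f (star xadj * a * xadj)).re + q * (f (star x * a * x)).re := by
  rw [star_mul_eq_mul_of_mul_eq_star_mul ha hadj, ← hadj]
  simp [mul_add, mul_assoc]

end Ordered

section

variable {A : Type*} [CStarAlgebra A] [PartialOrder A] [StarOrderedRing A]

theorem stmt10_general (a : A) (ha : 0 ≤ a)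
    (x xadj : A) (hadj : a * xadj = star x * a)
    (hx : BddAbove (aNormSet a x)) (hxadj : BddAbove (aNormSet a xadj))
    (α : ℝ) (hα0 : 0 ≤ α) (hα1 : α ≤ 1) :
    aNR a x ^ 2 ≤
      (α / 2) * aNR a (x * x) +
        aNorm a (((α / 4 : ℝ) : ℂ) • (x * xadj) +
          ((1 - 3 * α / 4 : ℝ) : ℂ) • (xadj * x)) := by
  set w := ((α / 4 : ℝ) : ℂ) • (x * xadj) + ((1 - 3 * α / 4 : ℝ) : ℂ) • (xadj * x)
  have hxx := bddAbove_norm_apply_mul_mul ha hadj hx hxadj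
  have hw := bddAbove_aNormSet_add ha
    (bddAbove_aNormSet_smul ha ((α / 4 : ℝ) : ℂ) (bddAbove_aNormSet_mul ha hx hxadj))
    (bddAbove_aNormSet_smul ha ((1 - 3 * α / 4 : ℝ) : ℂ) (bddAbove_aNormSet_mul ha hxadj hx))
  refine sq_sSup_le_of_forall_sq_le ?_
    (add_nonneg (mul_nonneg (by linarith) (aNR_nonneg a _)) (aNorm_nonneg a _))
  rintro _ ⟨f, hf, rfl⟩
  refine ⟨norm_nonneg _, ?_⟩
  calc ‖f (a * x)‖ ^ 2
      ≤ α / 2 * ‖f (a * (x * x))‖ +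
          (α / 4 * (f (star xadj * a * xadj)).re + (1 - 3 * α / 4) * (f (star x * a * x)).re) :=
        sq_norm_apply_mul_le ha hadj hf hα0 hα1
    _ = α / 2 * ‖f (a * (x * x))‖ + (f (a * w)).re := by
        rw [re_apply_mul_smul_add_smul ha hadj]
    _ ≤ α / 2 * aNR a (x * x) + aNorm a w := by
        gcongr
        · exact le_csSup hxx ⟨f, hf, rfl⟩
        · exact (re_apply_mul_le_sqrt ha hf w).trans (le_csSup hw ⟨f, hf, rfl⟩)

/-- `vₐ(x)² ≤ (α/2) vₐ(x²) + ‖(α/4) x x^{#a} + (1 - 3α/4) x^{#a} x‖ₐ`. -/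
theorem stmt10 (a : A) (ha : 0 ≤ a) (ha0 : a ≠ 0)
    (x xadj : A) (hadj : a * xadj = star x * a)
    (hx : BddAbove (aNormSet a x)) (hxadj : BddAbove (aNormSet a xadj))
    (α : ℝ) (hα0 : 0 ≤ α) (hα1 : α ≤ 1) :
    aNR a x ^ 2 ≤
      (α / 2) * aNR a (x * x) +
        aNorm a (((α / 4 : ℝ) : ℂ) • (x * xadj) +
          ((1 - 3 * α / 4 : ℝ) : ℂ) • (xadj * x)) :=
  stmt10_general a ha x xadj hadj hx hxadj α hα0 hα1

end
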